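/- arXiv:2106.07998 — 2 statements merged into one kernel-verified Lean document; each statement's English description precedes it below -/
import Mathlib

section
/- If A is Bernoulli(α) and C ∈ [0,1] with δ = E[C|A=1] − E[C|A=0], then the bias term (1/n)·V[C−A] equals (1/n)·(α(1−α)(1−2δ) + V[C]). -/
open MeasureTheory ProbabilityTheory

/-!
Since `A` takes only the values `0` and `1`, it is the indicator of `s = {A = 1}` and
`α = P(s)`. Expanding `Var[C - A] = Var[C] - 2 cov[C, A] + Var[A]`, one has
`Var[A] = α(1 - α)` and, splitting `E[C]` over `s` and `sᶜ`,
`cov[C, A] = (1 - α) ∫_s C - α ∫_{sᶜ} C = α(1 - α) δ`.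
-/

namespace ProbabilityTheory

lemma eq_indicator_one_of_forall_eq_zero_or_eq_one {Ω : Type*} {A : Ω → ℝ}
    (hA : ∀ ω, A ω = 0 ∨ A ω = 1) : A = {ω | A ω = 1}.indicator 1 := by
  ext ω
  rcases hA ω with h | h <;> simp [h]

variable {Ω : Type*} [MeasurableSpace Ω] {μ : Measure Ω} {s : Set Ω}

lemma memLp_indicator_one [IsFiniteMeasure μ] (p : ENNReal) (hs : MeasurableSet s) :
    MemLp (s.indicator (1 : Ω → ℝ)) p μ :=
  memLp_indicator_const p hs 1 (Or.inr (measure_ne_top μ s))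

lemma variance_indicator_one [IsProbabilityMeasure μ] (hs : MeasurableSet s) :
    Var[s.indicator 1; μ] = μ.real s * (1 - μ.real s) := by
  have hsq : (s.indicator 1 : Ω → ℝ) ^ 2 = s.indicator 1 := by
    ext ω
    by_cases h : ω ∈ s <;> simp [h]
  rw [variance_eq_sub (memLp_indicator_one 2 hs), hsq, integral_indicator_one hs]
  ring

lemma covariance_indicator_one_right [IsProbabilityMeasure μ] {X : Ω → ℝ}
    (hX : Integrable X μ) (hs : MeasurableSet s) :
    cov[X, s.indicator 1; μ]
      = (1 - μ.real s) * ∫ ω in s, X ω ∂μ - μ.real s * ∫ ω in sᶜ, X ω ∂μ := by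
  have hprod : (fun ω ↦ (X ω - μ[X]) * (s.indicator 1 ω - μ.real s))
      = fun ω ↦ s.indicator (fun ω ↦ X ω - μ[X]) ω - μ.real s * (X ω - μ[X]) := by
    ext ω
    by_cases h : ω ∈ s <;> simp [h] <;> ring
  have hcentered : ∫ ω, (X ω - μ[X]) ∂μ = 0 := by
    rw [integral_sub hX (integrable_const _)]
    simp
  have hsplit : μ[X] = ∫ ω in s, X ω ∂μ + ∫ ω in sᶜ, X ω ∂μ :=
    (integral_add_compl hs hX).symm
  have hXc : Integrable (fun ω ↦ X ω - μ[X]) μ := hX.sub (integrable_const _)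
  rw [covariance, integral_indicator_one hs, hprod, integral_sub (hXc.indicator hs)
    (hXc.const_mul _), integral_indicator hs, integral_const_mul, hcentered,
    integral_sub hX.integrableOn (integrable_const _), setIntegral_const, hsplit]
  simp only [smul_eq_mul]
  ring

end ProbabilityTheory

theorem bias_term_eq_general {Ω : Type*} [MeasurableSpace Ω]
    (μ : Measure Ω) [IsProbabilityMeasure μ]
    (C A : Ω → ℝ) (α δ : ℝ) (n : ℕ)
    (hA01 : ∀ ω, A ω = 0 ∨ A ω = 1)
    (hAmeas : Measurable A)
    (hC2 : MemLp C 2 μ)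
    (hα : ∫ ω, A ω ∂μ = α) (hα0 : 0 < α) (hα1 : α < 1)
    (hδ : δ = (∫ ω in {ω | A ω = 1}, C ω ∂μ) / α
            - (∫ ω in {ω | A ω = 0}, C ω ∂μ) / (1 - α)) :
    (1 / (n : ℝ)) * variance (fun ω => C ω - A ω) μ
      = (1 / (n : ℝ)) * (α * (1 - α) * (1 - 2 * δ) + variance C μ) := by
  set s := {ω | A ω = 1}
  have hs : MeasurableSet s := hAmeas (measurableSet_singleton 1)
  have hA : A = s.indicator 1 := eq_indicator_one_of_forall_eq_zero_or_eq_one hA01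
  have hαs : μ.real s = α := by rw [← hα, hA, integral_indicator_one hs]
  have hcompl : sᶜ = {ω | A ω = 0} := by
    ext ω
    rcases hA01 ω with h | h <;> simp [s, h]
  have hA2 : MemLp A 2 μ := hA ▸ memLp_indicator_one 2 hs
  rw [variance_fun_sub hC2 hA2, hA, variance_indicator_one hs,
    covariance_indicator_one_right (hC2.integrable one_le_two) hs, hcompl, hαs, hδ]
  field_simp [hα0.ne', (sub_pos.2 hα1).ne']
  ring

/-- If `A` is Bernoulli(α) and `C ∈ [0,1]` with `δ = E[C|A=1] − E[C|A=0]`, then the bias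
term `(1/n)·V[C−A]` equals `(1/n)·(α(1−α)(1−2δ) + V[C])`. -/
theorem bias_term_eq {Ω : Type*} [MeasurableSpace Ω]
    (μ : Measure Ω) [IsProbabilityMeasure μ]
    (C A : Ω → ℝ) (α δ : ℝ) (n : ℕ) (hn : 1 ≤ n)
    (hA01 : ∀ ω, A ω = 0 ∨ A ω = 1)
    (hAmeas : Measurable A) (hCmeas : Measurable C)
    (hCrange : ∀ ω, C ω ∈ Set.Icc (0 : ℝ) 1)
    (hC2 : MemLp C 2 μ)
    (hα : ∫ ω, A ω ∂μ = α) (hα0 : 0 < α) (hα1 : α < 1)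
    (hδ : δ = (∫ ω in {ω | A ω = 1}, C ω ∂μ) / α
            - (∫ ω in {ω | A ω = 0}, C ω ∂μ) / (1 - α)) :
    (1 / (n : ℝ)) * variance (fun ω => C ω - A ω) μ
      = (1 / (n : ℝ)) * (α * (1 - α) * (1 - 2 * δ) + variance C μ) :=
  bias_term_eq_general μ C A α δ n hA01 hAmeas hC2 hα hα0 hα1 hδ
end

section
/- Let buckets B₁,…,B_m partition the sample space, with n_i samples in bucket i, n = Σ n_i, and suppose within each bucket the samples (C_j, A_j) are i.i.d. with bucket means γ_i = E[C | B_i], α_i = E[A | B_i]. Then conditioning on the bucket counts, E[Σᵢ (n_i/n)(C̄_i − Ā_i)²] = Σᵢ (n_i/n)(γ_i − α_i)² + (1/n)Σᵢ V[C − A | B_i], where C̄_i, Ā_i are within-bucket sample means. -/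
/-!
For an i.i.d. sample of size `N`, the second moment of the sample mean of `f` is
`(E f)² + Var f / N`: its mean is `E f`, and the variance of a sum of independent copies is
additive. Applied to `f = C - A` in each bucket, the buckets being independent coordinate
blocks, the weights `nᵢ / n` turn `Var / nᵢ` into `Var / n`.
-/

open MeasureTheory ProbabilityTheory

namespace ProbabilityTheory

variable {Ω : Type*}

noncomputable def sampleMean {N : ℕ} (f : Ω → ℝ) (x : Fin N → Ω) : ℝ :=
  (1 / (N : ℝ)) * ∑ j, f (x j)

lemma sampleMean_sub {N : ℕ} (f g : Ω → ℝ) (x : Fin N → Ω) :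
    sampleMean (fun ω => f ω - g ω) x = sampleMean f x - sampleMean g x := by
  simp only [sampleMean, Finset.sum_sub_distrib, mul_sub]

variable [MeasurableSpace Ω] {ν : Measure Ω} [IsProbabilityMeasure ν] {f : Ω → ℝ}

lemma memLp_sampleMean {p : ENNReal} (N : ℕ) (hf : MemLp f p ν) :
    MemLp (sampleMean f) p (Measure.pi fun _ : Fin N => ν) :=
  (memLp_finsetSum _ fun j _ => hf.comp_measurePreserving (measurePreserving_eval _ j)).const_mul _

lemma integral_sampleMean {N : ℕ} (hN : N ≠ 0) (hf : Integrable f ν) :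
    ∫ x, sampleMean f x ∂(Measure.pi fun _ : Fin N => ν) = ∫ ω, f ω ∂ν := by
  simp only [sampleMean]
  rw [integral_const_mul, integral_finsetSum _ fun j _ => integrable_comp_eval hf]
  simp only [integral_comp_eval (μ := fun _ : Fin N => ν) hf.aestronglyMeasurable,
    Finset.sum_const, Finset.card_univ, Fintype.card_fin, nsmul_eq_mul]
  field_simp

lemma variance_sampleMean (N : ℕ) (hf : MemLp f 2 ν) :
    Var[sampleMean f; Measure.pi fun _ : Fin N => ν] = Var[f; ν] / N := by
  have hsum : Var[fun x : Fin N → Ω => ∑ j, f (x j); Measure.pi fun _ => ν] = N * Var[f; ν] := by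
    simpa [← Finset.sum_fn] using variance_sum_pi (μ := fun _ : Fin N => ν) fun _ => hf
  rw [show sampleMean f = fun x : Fin N → Ω => 1 / (N : ℝ) * ∑ j, f (x j) from rfl,
    variance_const_mul, hsum]
  rcases eq_or_ne (N : ℝ) 0 with hN | hN
  · simp [hN]
  · field_simp

lemma integral_sq_sampleMean {N : ℕ} (hN : N ≠ 0) (hf : MemLp f 2 ν) :
    ∫ x, sampleMean f x ^ 2 ∂(Measure.pi fun _ : Fin N => ν)
      = (∫ ω, f ω ∂ν) ^ 2 + Var[f; ν] / N := by
  have h := variance_eq_sub (memLp_sampleMean N hf)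
  rw [variance_sampleMean N hf, integral_sampleMean hN (hf.integrable one_le_two)] at h
  simp only [Pi.pow_apply] at h
  linarith

end ProbabilityTheory

lemma MeasureTheory.integral_sum_comp_eval {ι E : Type*} [Fintype ι] [NormedAddCommGroup E]
    [NormedSpace ℝ E] {X : ι → Type*} [∀ i, MeasurableSpace (X i)] {μ : ∀ i, Measure (X i)}
    [∀ i, IsProbabilityMeasure (μ i)] {g : ∀ i, X i → E} (hg : ∀ i, Integrable (g i) (μ i)) :
    ∫ x, ∑ i, g i (x i) ∂Measure.pi μ = ∑ i, ∫ y, g i y ∂μ i := by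
  rw [integral_finsetSum _ fun i _ => integrable_comp_eval (hg i)]
  exact Finset.sum_congr rfl fun i _ => integral_comp_eval (hg i).aestronglyMeasurable

theorem binned_sq_ece_expectation_general {Ω : Type*} [MeasurableSpace Ω]
    (m : ℕ) (μ : Fin m → Measure Ω) [∀ i, IsProbabilityMeasure (μ i)]
    (C A : Ω → ℝ) (nn : Fin m → ℕ) (n : ℕ)
    (hpos : ∀ i, 0 < nn i)
    (hC2 : ∀ i, MemLp C 2 (μ i)) (hA2 : ∀ i, MemLp A 2 (μ i))
    (γ α : Fin m → ℝ)
    (hγ : ∀ i, γ i = ∫ ω, C ω ∂(μ i)) (hα : ∀ i, α i = ∫ ω, A ω ∂(μ i)) :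
    ∫ ω : Π i : Fin m, Fin (nn i) → Ω,
        ∑ i, ((nn i : ℝ) / n) *
          ((1 / (nn i : ℝ)) * ∑ j, C (ω i j) - (1 / (nn i : ℝ)) * ∑ j, A (ω i j)) ^ 2
        ∂(Measure.pi fun i => Measure.pi fun _ : Fin (nn i) => μ i)
      = ∑ i, ((nn i : ℝ) / n) * (γ i - α i) ^ 2
        + (1 / (n : ℝ)) * ∑ i, variance (fun ω => C ω - A ω) (μ i) := by
  have hCA : ∀ i, MemLp (fun ω => C ω - A ω) 2 (μ i) := fun i => (hC2 i).sub (hA2 i)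
  calc _ = ∫ ω : Π i : Fin m, Fin (nn i) → Ω,
          ∑ i, ((nn i : ℝ) / n) * sampleMean (fun ω => C ω - A ω) (ω i) ^ 2
          ∂(Measure.pi fun i => Measure.pi fun _ : Fin (nn i) => μ i) := by
        simp only [sampleMean_sub]; rfl
    _ = ∑ i, ((nn i : ℝ) / n) * ∫ x, sampleMean (fun ω => C ω - A ω) x ^ 2
          ∂(Measure.pi fun _ : Fin (nn i) => μ i) := by
        rw [integral_sum_comp_eval fun i =>
          ((memLp_sampleMean _ (hCA i)).integrable_sq).const_mul _]
        simp only [integral_const_mul]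
    _ = ∑ i, ((nn i : ℝ) / n) * ((γ i - α i) ^ 2 + Var[fun ω => C ω - A ω; μ i] / nn i) := by
        refine Finset.sum_congr rfl fun i _ => ?_
        rw [integral_sq_sampleMean (hpos i).ne' (hCA i),
          integral_sub ((hC2 i).integrable one_le_two) ((hA2 i).integrable one_le_two), hγ, hα]
    _ = _ := by
        rw [Finset.mul_sum, ← Finset.sum_add_distrib]
        refine Finset.sum_congr rfl fun i _ => ?_
        have := (hpos i).ne'
        field_simp

/-- With `m` fixed buckets, bucket `i` containing `nn i` i.i.d. samples from `μ i` with
bucket means `γ i = E[C | B_i]`, `α i = E[A | B_i]`, and `n = ∑ nn i`, conditioning on the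
bucket counts: `E[∑ᵢ (nᵢ/n)(C̄ᵢ − Āᵢ)²] = ∑ᵢ (nᵢ/n)(γᵢ − αᵢ)² + (1/n)∑ᵢ V[C − A | B_i]`. -/
theorem binned_sq_ece_expectation {Ω : Type*} [MeasurableSpace Ω]
    (m : ℕ) (μ : Fin m → Measure Ω) [∀ i, IsProbabilityMeasure (μ i)]
    (C A : Ω → ℝ) (nn : Fin m → ℕ) (n : ℕ)
    (hpos : ∀ i, 0 < nn i) (hn : n = ∑ i, nn i)
    (hC2 : ∀ i, MemLp C 2 (μ i)) (hA2 : ∀ i, MemLp A 2 (μ i))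
    (γ α : Fin m → ℝ)
    (hγ : ∀ i, γ i = ∫ ω, C ω ∂(μ i)) (hα : ∀ i, α i = ∫ ω, A ω ∂(μ i)) :
    ∫ ω : Π i : Fin m, Fin (nn i) → Ω,
        ∑ i, ((nn i : ℝ) / n) *
          ((1 / (nn i : ℝ)) * ∑ j, C (ω i j) - (1 / (nn i : ℝ)) * ∑ j, A (ω i j)) ^ 2
        ∂(Measure.pi fun i => Measure.pi fun _ : Fin (nn i) => μ i)
      = ∑ i, ((nn i : ℝ) / n) * (γ i - α i) ^ 2
        + (1 / (n : ℝ)) * ∑ i, variance (fun ω => C ω - A ω) (μ i) :=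
  binned_sq_ece_expectation_general m μ C A nn n hpos hC2 hA2 γ α hγ hα
end
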